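/- Let M be a matroid on ground set E. Define a relation on E by a ∼ b iff a = b or there exist bases B₁, B₂ of M with B₂ = (B₁ \ {a}) ∪ {b}. Then ∼ is an equivalence relation on E. -/

import Mathlib

/-- The basis exchange axiom for a collection of subsets of a finite set `E`. -/
def ExchangeAxiom {α : Type*} [DecidableEq α] (𝓑 : Finset (Finset α)) : Prop :=
  ∀ B₁ ∈ 𝓑, ∀ B₂ ∈ 𝓑, ∀ x ∈ B₁ \ B₂, ∃ y ∈ B₂ \ B₁, insert y (B₁.erase x) ∈ 𝓑

/-- The exchange relation on the ground set of a matroid: `a ∼ b` iff `a = b` or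
there exist bases `B₁, B₂` with `a ∈ B₁`, `b ∉ B₁` and `B₂ = (B₁ \ {a}) ∪ {b}`. -/
def exchRel {α : Type*} [DecidableEq α] (𝓑 : Finset (Finset α)) (a b : α) : Prop :=
  a = b ∨ ∃ B₁ ∈ 𝓑, ∃ B₂ ∈ 𝓑, a ∈ B₁ ∧ b ∉ B₁ ∧ B₂ = insert b (B₁.erase a)

/-!
The bases in `𝓑` are the bases of a matroid `M`. For `a ≠ b`, some basis `B ∋ a` with `b ∉ B`
exchanges `a` for `b` exactly when `a` lies in the fundamental circuit of `b` with respect to `B`,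
so `exchRel 𝓑` is Whitney's relation "equal or on a common circuit" of `M`. That relation is
transitive: given circuits `C₁ ∋ x` and `C₂ ∋ z` that meet, two strong circuit eliminations
produce a circuit `C₄ ∋ z` meeting `C₁` with `C₁ ∪ C₄ ⊊ C₁ ∪ C₂`, and induction on `|C₁ ∪ C₂|`
yields a circuit through `x` and `z`.
-/

open Set

namespace Matroid

variable {α : Type*} {M : Matroid α} {C₁ C₂ : Set α} {a b x z : α}

theorem IsCircuit.exists_isCircuit_mem_mem_of_inter_nonempty [M.Finitary]
    (hC₁ : M.IsCircuit C₁) (hC₂ : M.IsCircuit C₂) (hC₁₂ : (C₁ ∩ C₂).Nonempty)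
    (hx : x ∈ C₁) (hz : z ∈ C₂) : ∃ C ⊆ C₁ ∪ C₂, M.IsCircuit C ∧ x ∈ C ∧ z ∈ C := by
  induction hn : (C₁ ∪ C₂).ncard using Nat.strong_induction_on generalizing C₁ C₂ with
  | _ n ih =>
  by_cases hxC₂ : x ∈ C₂
  · exact ⟨C₂, subset_union_right, hC₂, hxC₂, hz⟩
  by_cases hzC₁ : z ∈ C₁
  · exact ⟨C₁, subset_union_left, hC₁, hx, hzC₁⟩
  obtain ⟨e, he₁, he₂⟩ := hC₁₂
  obtain ⟨C₃, hC₃ss, hC₃, hxC₃⟩ := hC₁.strong_elimination hC₂ he₁ he₂ hx hxC₂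
  by_cases hzC₃ : z ∈ C₃
  · exact ⟨C₃, hC₃ss.trans sdiff_subset, hC₃, hxC₃, hzC₃⟩
  obtain ⟨f, hfC₃, hfC₁⟩ : ∃ f ∈ C₃, f ∉ C₁ := not_subset.1 fun h ↦
    (hC₃ss ((hC₃.eq_of_subset_isCircuit hC₁ h) ▸ he₁)).2 rfl
  have hfC₂ : f ∈ C₂ := ((hC₃ss hfC₃).1).resolve_left hfC₁
  obtain ⟨C₄, hC₄ss, hC₄, hzC₄⟩ := hC₂.strong_elimination hC₃ hfC₂ hfC₃ hz hzC₃
  obtain ⟨g, hgC₄, hgC₂⟩ : ∃ g ∈ C₄, g ∉ C₂ := not_subset.1 fun h ↦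
    (hC₄ss ((hC₄.eq_of_subset_isCircuit hC₂ h) ▸ hfC₂)).2 rfl
  have hgC₁ : g ∈ C₁ :=
    ((hC₃ss (((hC₄ss hgC₄).1).resolve_left hgC₂)).1).resolve_right hgC₂
  have hC₁₄ss : C₁ ∪ C₄ ⊆ C₁ ∪ C₂ :=
    union_subset subset_union_left <| hC₄ss.trans <| sdiff_subset.trans <|
      union_subset subset_union_right (hC₃ss.trans sdiff_subset)
  have hlt : (C₁ ∪ C₄).ncard < n := hn ▸ ncard_lt_ncard
    (ssubset_of_subset_not_subset hC₁₄ss fun h ↦ by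
      obtain hf | hf := h (mem_union_right C₁ hfC₂)
      exacts [hfC₁ hf, (hC₄ss hf).2 rfl])
    (hC₁.finite.union hC₂.finite)
  obtain ⟨C, hCss, hC, hxC, hzC⟩ := ih _ hlt hC₁ hC₄ ⟨g, hgC₁, hgC₄⟩ hx hzC₄ rfl
  exact ⟨C, hCss.trans hC₁₄ss, hC, hxC, hzC⟩

def ConnectedTo (M : Matroid α) (a b : α) : Prop :=
  a = b ∨ ∃ C, M.IsCircuit C ∧ a ∈ C ∧ b ∈ C

theorem connectedTo_equivalence [M.Finitary] : Equivalence M.ConnectedTo where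
  refl _ := .inl rfl
  symm := by
    rintro a b (rfl | ⟨C, hC, haC, hbC⟩)
    exacts [.inl rfl, .inr ⟨C, hC, hbC, haC⟩]
  trans := by
    rintro a b c (rfl | ⟨C₁, hC₁, haC₁, hbC₁⟩) (rfl | ⟨C₂, hC₂, hbC₂, hcC₂⟩)
    · exact .inl rfl
    · exact .inr ⟨C₂, hC₂, hbC₂, hcC₂⟩
    · exact .inr ⟨C₁, hC₁, haC₁, hbC₁⟩
    obtain ⟨C, -, hC, haC, hcC⟩ :=
      hC₁.exists_isCircuit_mem_mem_of_inter_nonempty hC₂ ⟨b, hbC₁, hbC₂⟩ haC₁ hcC₂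
    exact .inr ⟨C, hC, haC, hcC⟩

theorem IsBase.isBase_exchange_iff_mem_fundCircuit {B : Set α} (hB : M.IsBase B)
    (ha : a ∈ B) (hbE : b ∈ M.E) (hb : b ∉ B) :
    M.IsBase (insert b (B \ {a})) ↔ a ∈ M.fundCircuit b B := by
  have hab : b ≠ a := ne_of_mem_of_not_mem ha hb |>.symm
  rw [hB.indep.mem_fundCircuit_iff (by rwa [hB.closure_eq]) hb, ← insert_sdiff_singleton_comm hab]
  exact ⟨IsBase.indep, hB.exchange_isBase_of_indep hb⟩

theorem exists_isBase_exchange_iff_exists_isCircuit (hab : a ≠ b) :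
    (∃ B, M.IsBase B ∧ a ∈ B ∧ b ∉ B ∧ M.IsBase (insert b (B \ {a}))) ↔
      ∃ C, M.IsCircuit C ∧ a ∈ C ∧ b ∈ C := by
  constructor
  · rintro ⟨B, hB, haB, hbB, hB'⟩
    have hbE : b ∈ M.E := hB'.subset_ground (mem_insert b _)
    exact ⟨M.fundCircuit b B, hB.fundCircuit_isCircuit hbE hbB,
      (hB.isBase_exchange_iff_mem_fundCircuit haB hbE hbB).1 hB', M.mem_fundCircuit b B⟩
  · rintro ⟨C, hC, haC, hbC⟩
    obtain ⟨B, hB, hCB⟩ := (hC.sdiff_singleton_indep hbC).exists_isBase_superset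
    have hbB : b ∉ B := fun hbB ↦ hC.not_indep <| hB.indep.subset fun x hx ↦ by
      obtain rfl | hxb := eq_or_ne x b
      exacts [hbB, hCB ⟨hx, hxb⟩]
    have haB : a ∈ B := hCB ⟨haC, hab⟩
    have hCfund : C = M.fundCircuit b B :=
      hC.eq_fundCircuit_of_subset hB.indep (by simpa using hCB)
    refine ⟨B, hB, haB, hbB, ?_⟩
    rw [hB.isBase_exchange_iff_mem_fundCircuit haB (hC.subset_ground hbC) hbB, ← hCfund]
    exact haC

theorem connectedTo_iff_exists_isBase_exchange :
    M.ConnectedTo a b ↔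
      a = b ∨ ∃ B, M.IsBase B ∧ a ∈ B ∧ b ∉ B ∧ M.IsBase (insert b (B \ {a})) := by
  obtain rfl | hab := eq_or_ne a b
  · simp [ConnectedTo]
  simp only [ConnectedTo, hab, false_or, exists_isBase_exchange_iff_exists_isCircuit hab]

end Matroid

section FinsetBases

variable {α : Type*} [DecidableEq α] {𝓑 : Finset (Finset α)}

theorem ExchangeAxiom.exchangeProperty (hex : ExchangeAxiom 𝓑) :
    Matroid.ExchangeProperty fun S : Set α ↦ ∃ B ∈ 𝓑, (B : Set α) = S := by
  rintro _ _ ⟨B₁, hB₁, rfl⟩ ⟨B₂, hB₂, rfl⟩ x hx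
  obtain ⟨y, hy, hyB⟩ := hex B₁ hB₁ B₂ hB₂ x (by simpa using hx)
  exact ⟨y, by simpa using hy, _, hyB, by simp⟩

def ExchangeAxiom.matroid (hex : ExchangeAxiom 𝓑) (h0 : 𝓑.Nonempty) : Matroid α :=
  Matroid.ofExistsFiniteIsBase univ (fun S ↦ ∃ B ∈ 𝓑, (B : Set α) = S)
    (h0.elim fun B hB ↦ ⟨B, ⟨B, hB, rfl⟩, B.finite_toSet⟩) hex.exchangeProperty
    fun _ _ ↦ subset_univ _

instance ExchangeAxiom.rankFinite_matroid (hex : ExchangeAxiom 𝓑) (h0 : 𝓑.Nonempty) :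
    (hex.matroid h0).RankFinite := by
  unfold ExchangeAxiom.matroid; infer_instance

theorem ExchangeAxiom.isBase_matroid_iff (hex : ExchangeAxiom 𝓑) (h0 : 𝓑.Nonempty)
    {S : Set α} :
    (hex.matroid h0).IsBase S ↔ ∃ B ∈ 𝓑, (B : Set α) = S := Iff.rfl

theorem ExchangeAxiom.exchRel_iff_exists_isBase_exchange (hex : ExchangeAxiom 𝓑)
    (h0 : 𝓑.Nonempty) {a b : α} :
    exchRel 𝓑 a b ↔ a = b ∨ ∃ B, (hex.matroid h0).IsBase B ∧ a ∈ B ∧ b ∉ B ∧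
      (hex.matroid h0).IsBase (insert b (B \ {a})) := by
  simp only [exchRel, hex.isBase_matroid_iff]
  refine or_congr_right ⟨?_, ?_⟩
  · rintro ⟨B₁, hB₁, B₂, hB₂, ha, hb, rfl⟩
    exact ⟨B₁, ⟨B₁, hB₁, rfl⟩, ha, hb, _, hB₂, by simp⟩
  · rintro ⟨_, ⟨B₁, hB₁, rfl⟩, ha, hb, B₂, hB₂, h⟩
    exact ⟨B₁, hB₁, B₂, hB₂, ha, hb, Finset.coe_injective (by simpa using h)⟩

end FinsetBases

theorem exchRel_equivalence_general {α : Type*} [DecidableEq α]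
    (𝓑 : Finset (Finset α)) (h0 : 𝓑.Nonempty)
    (hex : ExchangeAxiom 𝓑) :
    Equivalence (exchRel 𝓑) := by
  have h : exchRel 𝓑 = (hex.matroid h0).ConnectedTo := by
    ext a b
    rw [hex.exchRel_iff_exists_isBase_exchange h0,
      Matroid.connectedTo_iff_exists_isBase_exchange]
  exact h ▸ Matroid.connectedTo_equivalence

/-- **(Oxley.)** For a matroid `M` on a finite ground set `E`, the relation
`a ∼ b` iff `a = b` or some basis exchange replaces `a` by `b`, is an
equivalence relation on `E`. -/
theorem exchRel_equivalence {α : Type*} [Fintype α] [DecidableEq α] (k : ℕ)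
    (𝓑 : Finset (Finset α)) (h0 : 𝓑.Nonempty) (hk : ∀ B ∈ 𝓑, B.card = k)
    (hex : ExchangeAxiom 𝓑) :
    Equivalence (exchRel 𝓑) :=
  exchRel_equivalence_general 𝓑 h0 hex
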